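/- arXiv:1508.06898 — 2 statements merged into one kernel-verified Lean document; each statement's English description precedes it below -/
import Mathlib

section
/- For vectors a = (a₁,…,a_m) and c = (c₁,…,c_m) in ℝ^m and any 1 ≤ k ≤ m, the k-th largest entries satisfy |kmax(a) - kmax(c)| ≤ max_{1 ≤ i ≤ m} |aᵢ - cᵢ|, where kmax denotes the k-th largest coordinate. Consequently, if λ_k and λ'_k are the persistence landscape functions of two lists of birth–death pairs (bᵢ,dᵢ) and (b'ᵢ,d'ᵢ), i = 1,…,m, then for every k and every x ∈ ℝ, |λ_k(x) - λ'_k(x)| ≤ max_{1 ≤ i ≤ m} max(|bᵢ - b'ᵢ|, |dᵢ - d'ᵢ|); i.e. persistence landscapes are stable in the supremum norm with respect to perturbations of the birth–death pairs. -/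
/-- The hat function `f_{(b,d)}(x) = max 0 (min (x - b) (d - x))`. -/
noncomputable def hat (b d : ℝ) (x : ℝ) : ℝ := max 0 (min (x - b) (d - x))

/-- The `k`-th largest element of a list of reals (`k ≥ 1`), defined as the
`(k-1)`-st entry of the list sorted in nonincreasing order, and `0` if `k`
exceeds the length of the list. -/
noncomputable def kthLargest (k : ℕ) (l : List ℝ) : ℝ :=
  (l.insertionSort (· ≥ ·)).getD (k - 1) 0

/-- The `k`-th largest coordinate of a vector in `ℝ^m`. -/
noncomputable def kmax (m k : ℕ) (a : Fin m → ℝ) : ℝ := kthLargest k (List.ofFn a)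

/-- The persistence landscape function `λ_k` of the birth--death pairs
`(b i, d i)`, `i = 1, …, m`. -/
noncomputable def landscape (m : ℕ) (b d : Fin m → ℝ) (k : ℕ) (x : ℝ) : ℝ :=
  kthLargest k (List.ofFn fun i => hat (b i) (d i) x)

/-!
The `(j+1)`-st largest entry of a list is `≥ v` exactly when more than `j` entries are `≥ v`.
If every entry moves by at most `ε`, each entry `≥ v` of one list gives an entry `≥ v - ε` of
the other, so the counts, and hence the `k`-th largest entries, move by at most `ε`.
A hat function is `1`-Lipschitz in its birth and death parameters, which gives the landscape bound.
-/

theorem List.Forall₂.countP_le {α β : Type*} {R : α → β → Prop} {p : α → Bool} {q : β → Bool}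
    (hpq : ∀ a b, R a b → p a → q b) :
    ∀ {l₁ : List α} {l₂ : List β}, List.Forall₂ R l₁ l₂ → l₁.countP p ≤ l₂.countP q
  | _, _, .nil => le_rfl
  | a :: _, b :: _, .cons hab h => by
    have htail := h.countP_le hpq
    rw [List.countP_cons, List.countP_cons]
    by_cases ha : p a
    · simp [ha, hpq a b hab ha, htail]
    · simp only [ha, Bool.false_eq_true, if_false, add_zero]
      exact htail.trans (Nat.le_add_right _ _)

theorem List.forall₂_ofFn {α β : Type*} {R : α → β → Prop} :
    ∀ {n : ℕ} {f : Fin n → α} {g : Fin n → β}, (∀ i, R (f i) (g i)) →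
      List.Forall₂ R (List.ofFn f) (List.ofFn g)
  | 0, _, _, _ => by simp
  | _ + 1, _, _, h => by
    rw [List.ofFn_succ, List.ofFn_succ]
    exact .cons (h 0) (List.forall₂_ofFn fun i => h i.succ)

theorem le_getElem_iff_lt_countP_of_pairwise_ge {α : Type*} [LinearOrder α] (v : α) :
    ∀ {s : List α}, s.Pairwise (· ≥ ·) → ∀ {j : ℕ} (hj : j < s.length),
      v ≤ s[j] ↔ j < s.countP (fun x => decide (v ≤ x))
  | [], _, _, hj => absurd hj (by simp)
  | x :: t, hs, j, hj => by
    have hxt : ∀ y ∈ t, y ≤ x := fun y hy => List.rel_of_pairwise_cons hs hy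
    rw [List.countP_cons]
    by_cases hvx : v ≤ x
    · cases j with
      | zero => simp [hvx]
      | succ j => simp [hvx, le_getElem_iff_lt_countP_of_pairwise_ge v hs.of_cons]
    · have hcount : t.countP (fun x => decide (v ≤ x)) = 0 :=
        List.countP_eq_zero.mpr fun y hy hvy => hvx ((of_decide_eq_true hvy).trans (hxt y hy))
      cases j with
      | zero => simp [hvx, hcount]
      | succ j =>
        simp only [List.getElem_cons_succ, hcount, hvx]
        exact iff_of_false (fun h => hvx (h.trans (hxt _ (List.getElem_mem _)))) (by simp)

theorem le_kthLargest_succ_iff {l : List ℝ} {j : ℕ} (hj : j < l.length) (v : ℝ) :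
    v ≤ kthLargest (j + 1) l ↔ j < l.countP (fun x => decide (v ≤ x)) := by
  have hperm := List.perm_insertionSort (· ≥ ·) l
  have hjs : j < (l.insertionSort (· ≥ ·)).length := hperm.length_eq ▸ hj
  rw [kthLargest, Nat.add_sub_cancel, List.getD_eq_getElem _ _ hjs,
    le_getElem_iff_lt_countP_of_pairwise_ge v (List.pairwise_insertionSort _ _) hjs,
    hperm.countP_eq]

theorem kthLargest_succ_eq_zero {l : List ℝ} {j : ℕ} (hj : l.length ≤ j) :
    kthLargest (j + 1) l = 0 := by
  rw [kthLargest, Nat.add_sub_cancel, List.getD_eq_default]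
  rwa [(List.perm_insertionSort _ l).length_eq]

theorem kthLargest_succ_sub_le {l₁ l₂ : List ℝ} {ε : ℝ}
    (h : List.Forall₂ (fun x y => x ≤ y + ε) l₁ l₂) {j : ℕ} (hj : j < l₁.length) :
    kthLargest (j + 1) l₁ - kthLargest (j + 1) l₂ ≤ ε := by
  have hcount := (le_kthLargest_succ_iff hj _).mp le_rfl
  rw [sub_le_comm, le_kthLargest_succ_iff (h.length_eq ▸ hj)]
  refine hcount.trans_le (h.countP_le fun x y hxy hx => ?_)
  simp only [decide_eq_true_eq] at hx ⊢
  linarith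

theorem abs_kthLargest_sub_le {l₁ l₂ : List ℝ} {ε : ℝ} (hε : 0 ≤ ε)
    (h : List.Forall₂ (fun x y => |x - y| ≤ ε) l₁ l₂) (k : ℕ) :
    |kthLargest k l₁ - kthLargest k l₂| ≤ ε := by
  -- `k = 0` indexes like `k = 1`, by truncated subtraction
  have hk : ∀ l, kthLargest k l = kthLargest (k - 1 + 1) l := fun l => by
    simp only [kthLargest, Nat.add_sub_cancel]
  rw [hk, hk]
  rcases lt_or_ge (k - 1) l₁.length with hj | hj
  · refine abs_sub_le_iff.mpr ⟨kthLargest_succ_sub_le ?_ hj,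
      kthLargest_succ_sub_le ?_ (h.length_eq ▸ hj)⟩
    · exact h.imp fun x y hxy => by linarith [le_abs_self (x - y)]
    · exact (h.imp fun x y hxy => show y ≤ x + ε by linarith [neg_abs_le (x - y)]).flip
  · rw [kthLargest_succ_eq_zero hj, kthLargest_succ_eq_zero (h.length_eq ▸ hj), sub_self,
      abs_zero]
    exact hε

theorem abs_kthLargest_ofFn_sub_le {m : ℕ} (hm : 1 ≤ m) (a c : Fin m → ℝ) (k : ℕ) :
    |kthLargest k (List.ofFn a) - kthLargest k (List.ofFn c)| ≤
      Finset.univ.sup' (Finset.univ_nonempty_iff.mpr ⟨⟨0, hm⟩⟩) (fun i => |a i - c i|) :=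
  abs_kthLargest_sub_le
    (Finset.le_sup'_of_le (fun i => |a i - c i|) (Finset.mem_univ ⟨0, hm⟩) (abs_nonneg _))
    (List.forall₂_ofFn fun i => Finset.le_sup' (fun i => |a i - c i|) (Finset.mem_univ i)) k

theorem abs_hat_sub_hat_le (b d b' d' x : ℝ) :
    |hat b d x - hat b' d' x| ≤ max |b - b'| |d - d'| :=
  calc |hat b d x - hat b' d' x|
      ≤ |min (x - b) (d - x) - min (x - b') (d' - x)| := by
        simpa only [hat, max_comm (0 : ℝ)] using abs_max_sub_max_le_abs _ _ (0 : ℝ)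
    _ ≤ max |x - b - (x - b')| |d - x - (d' - x)| := abs_min_sub_min_le_max _ _ _ _
    _ = max |b - b'| |d - d'| := by
        rw [sub_sub_sub_cancel_left, sub_sub_sub_cancel_right, abs_sub_comm b']

theorem landscape_stability_general (m : ℕ) (hm : 1 ≤ m)
    (b d b' d' : Fin m → ℝ) :
    (∀ (a c : Fin m → ℝ) (k : ℕ), 1 ≤ k → k ≤ m →
      |kmax m k a - kmax m k c| ≤
        Finset.univ.sup' (Finset.univ_nonempty_iff.mpr ⟨⟨0, hm⟩⟩)
          (fun i => |a i - c i|)) ∧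
    (∀ (k : ℕ) (x : ℝ),
      |landscape m b d k x - landscape m b' d' k x| ≤
        Finset.univ.sup' (Finset.univ_nonempty_iff.mpr ⟨⟨0, hm⟩⟩)
          (fun i => max |b i - b' i| |d i - d' i|)) :=
  ⟨fun a c k _ _ => abs_kthLargest_ofFn_sub_le hm a c k, fun k x =>
    (abs_kthLargest_ofFn_sub_le hm _ _ k).trans
      (Finset.sup'_mono_fun fun _ _ => abs_hat_sub_hat_le _ _ _ _ x)⟩

/-- Stability of the `k`-th largest coordinate and of persistence landscapes:
`|kmax(a) - kmax(c)| ≤ maxᵢ |aᵢ - cᵢ|`, and consequently the landscape functions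
of two lists of birth--death pairs satisfy
`|λ_k(x) - λ'_k(x)| ≤ maxᵢ max (|bᵢ - b'ᵢ|) (|dᵢ - d'ᵢ|)`. -/
theorem landscape_stability (m : ℕ) (hm : 1 ≤ m)
    (b d b' d' : Fin m → ℝ) (hbd : ∀ i, b i < d i) (hbd' : ∀ i, b' i < d' i) :
    (∀ (a c : Fin m → ℝ) (k : ℕ), 1 ≤ k → k ≤ m →
      |kmax m k a - kmax m k c| ≤
        Finset.univ.sup' (Finset.univ_nonempty_iff.mpr ⟨⟨0, hm⟩⟩)
          (fun i => |a i - c i|)) ∧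
    (∀ (k : ℕ) (x : ℝ),
      |landscape m b d k x - landscape m b' d' k x| ≤
        Finset.univ.sup' (Finset.univ_nonempty_iff.mpr ⟨⟨0, hm⟩⟩)
          (fun i => max |b i - b' i| |d i - d' i|)) :=
  landscape_stability_general m hm b d b' d'
end

section
/- Let j, k be real numbers with j + 1 < k. Consider the two-point sets D₁ = {(j,k), (j+1,k+1)} and D₂ = {(j,k+1), (j+1,k)} in ℝ². There are exactly two bijections from D₁ to D₂: b₁ given by (j,k) ↦ (j,k+1), (j+1,k+1) ↦ (j+1,k), and b₂ given by (j,k) ↦ (j+1,k), (j+1,k+1) ↦ (j,k+1). For every p ≥ 1 the two bijections have equal p-Wasserstein cost, namely ∑_{x ∈ D₁} ‖x - b₁(x)‖^p = ∑_{x ∈ D₁} ‖x - b₂(x)‖^p = 2 (each point is moved Euclidean distance exactly 1), yet the corresponding sets of midpoints of the matching segments differ: b₁ yields {(j, k+1/2), (j+1, k+1/2)} while b₂ yields {(j+1/2, k), (j+1/2, k+1)}, and these two sets are not equal. Hence the Fréchet mean of two persistence diagrams, defined as the set of midpoints of a cost-minimizing matching, is not well-defined. -/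
/-- A point of the plane `ℝ²` with the Euclidean norm. -/
noncomputable def pt (a c : ℝ) : EuclideanSpace ℝ (Fin 2) := WithLp.toLp 2 ![a, c]

/-!
Both matchings move every point by a unit vector (vertically for `b₁`, horizontally for `b₂`),
so their `p`-costs coincide for every `p`; but the midpoints of `b₁` have first coordinates
`j, j + 1` while those of `b₂` have first coordinate `j + 1/2`.
-/

namespace Set

variable {α β : Type*} {f g : α → β} {a b : α} {a' b' : β}

theorem eqOn_pair_iff : EqOn f g {a, b} ↔ f a = g a ∧ f b = g b := by
  simp [EqOn]

theorem bijOn_pair (hne : a' ≠ b') (ha : f a = a') (hb : f b = b') :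
    BijOn f {a, b} {a', b'} := by
  subst ha hb
  exact (bijOn_singleton.mpr rfl).insert (by simpa using hne)

theorem bijOn_pair_swap (hne : a' ≠ b') (ha : f a = b') (hb : f b = a') :
    BijOn f {a, b} {a', b'} :=
  pair_comm b' a' ▸ bijOn_pair hne.symm ha hb

theorem BijOn.pair_cases (hf : BijOn f {a, b} {a', b'}) (hne : a ≠ b) :
    (f a = a' ∧ f b = b') ∨ (f a = b' ∧ f b = a') := by
  have hfa : f a = a' ∨ f a = b' := hf.mapsTo (mem_insert a {b})
  have hfb : f b = a' ∨ f b = b' := hf.mapsTo (mem_insert_of_mem a rfl)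
  have hfab : f a ≠ f b := hf.injOn.ne (mem_insert a {b}) (mem_insert_of_mem a rfl) hne
  grind

end Set

theorem pt_ne_of_fst_ne {a c a' c' : ℝ} (h : a ≠ a') : pt a c ≠ pt a' c' :=
  fun hpt => h (by simpa [pt] using congrArg (· 0) hpt)

theorem norm_pt_sub_pt (a c a' c' : ℝ) :
    ‖pt a c - pt a' c'‖ = √((a - a') ^ 2 + (c - c') ^ 2) := by
  simp [pt, EuclideanSpace.norm_eq, Fin.sum_univ_two, sq_abs]

theorem midpoint_pt (a c a' c' : ℝ) :
    midpoint ℝ (pt a c) (pt a' c') = pt ((a + a') / 2) ((c + c') / 2) := by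
  ext i
  fin_cases i <;> simp [pt, midpoint_eq_smul_add] <;> ring

theorem frechet_mean_not_well_defined_general (j k : ℝ)
    (A B A' B' : EuclideanSpace ℝ (Fin 2))
    (hA : A = pt j k) (hB : B = pt (j + 1) (k + 1))
    (hA' : A' = pt j (k + 1)) (hB' : B' = pt (j + 1) k)
    (b₁ b₂ : EuclideanSpace ℝ (Fin 2) → EuclideanSpace ℝ (Fin 2))
    (hb₁A : b₁ A = A') (hb₁B : b₁ B = B')
    (hb₂A : b₂ A = B') (hb₂B : b₂ B = A') :
    -- b₁ and b₂ are bijections from D₁ = {A, B} onto D₂ = {A', B'}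
    Set.BijOn b₁ {A, B} {A', B'} ∧ Set.BijOn b₂ {A, B} {A', B'} ∧
    -- they are distinct on D₁, and every bijection D₁ → D₂ agrees on D₁ with
    -- one of them: there are exactly two bijections from D₁ to D₂
    ¬ Set.EqOn b₁ b₂ {A, B} ∧
    (∀ f : EuclideanSpace ℝ (Fin 2) → EuclideanSpace ℝ (Fin 2),
      Set.BijOn f {A, B} {A', B'} →
        Set.EqOn f b₁ {A, B} ∨ Set.EqOn f b₂ {A, B}) ∧
    -- each point is moved Euclidean distance exactly 1
    (‖A - b₁ A‖ = 1 ∧ ‖B - b₁ B‖ = 1 ∧ ‖A - b₂ A‖ = 1 ∧ ‖B - b₂ B‖ = 1) ∧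
    -- for every p ≥ 1 the two bijections have equal p-Wasserstein cost, namely 2
    (∀ p : ℝ, 1 ≤ p →
      ‖A - b₁ A‖ ^ p + ‖B - b₁ B‖ ^ p = 2 ∧
      ‖A - b₂ A‖ ^ p + ‖B - b₂ B‖ ^ p = 2) ∧
    -- the corresponding sets of midpoints of the matching segments differ
    ({midpoint ℝ A (b₁ A), midpoint ℝ B (b₁ B)} : Set (EuclideanSpace ℝ (Fin 2))) =
      {pt j (k + 1/2), pt (j + 1) (k + 1/2)} ∧
    ({midpoint ℝ A (b₂ A), midpoint ℝ B (b₂ B)} : Set (EuclideanSpace ℝ (Fin 2))) =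
      {pt (j + 1/2) k, pt (j + 1/2) (k + 1)} ∧
    ({midpoint ℝ A (b₁ A), midpoint ℝ B (b₁ B)} : Set (EuclideanSpace ℝ (Fin 2))) ≠
      {midpoint ℝ A (b₂ A), midpoint ℝ B (b₂ B)} := by
  subst hA hB hA' hB'
  have hAB : pt j k ≠ pt (j + 1) (k + 1) := pt_ne_of_fst_ne (by linarith)
  have hA'B' : pt j (k + 1) ≠ pt (j + 1) k := pt_ne_of_fst_ne (by linarith)
  obtain ⟨hn₁A, hn₁B, hn₂A, hn₂B⟩ : ‖pt j k - b₁ (pt j k)‖ = 1 ∧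
      ‖pt (j + 1) (k + 1) - b₁ (pt (j + 1) (k + 1))‖ = 1 ∧
      ‖pt j k - b₂ (pt j k)‖ = 1 ∧ ‖pt (j + 1) (k + 1) - b₂ (pt (j + 1) (k + 1))‖ = 1 := by
    simp only [hb₁A, hb₁B, hb₂A, hb₂B, norm_pt_sub_pt]
    norm_num
  have mid₁ : ({midpoint ℝ (pt j k) (b₁ (pt j k)),
      midpoint ℝ (pt (j + 1) (k + 1)) (b₁ (pt (j + 1) (k + 1)))} : Set _) =
      {pt j (k + 1/2), pt (j + 1) (k + 1/2)} := by
    rw [hb₁A, hb₁B, midpoint_pt, midpoint_pt]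
    ring_nf
  have mid₂ : ({midpoint ℝ (pt j k) (b₂ (pt j k)),
      midpoint ℝ (pt (j + 1) (k + 1)) (b₂ (pt (j + 1) (k + 1)))} : Set _) =
      {pt (j + 1/2) k, pt (j + 1/2) (k + 1)} := by
    rw [hb₂A, hb₂B, midpoint_pt, midpoint_pt]
    ring_nf
  refine ⟨Set.bijOn_pair hA'B' hb₁A hb₁B, Set.bijOn_pair_swap hA'B' hb₂A hb₂B,
    fun h => hA'B' (hb₁A ▸ hb₂A ▸ (Set.eqOn_pair_iff.1 h).1), fun f hf => ?_,
    ⟨hn₁A, hn₁B, hn₂A, hn₂B⟩, fun p _ => ?_, mid₁, mid₂, ?_⟩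
  · exact (hf.pair_cases hAB).imp
      (fun ⟨ha, hb⟩ => Set.eqOn_pair_iff.2 ⟨ha.trans hb₁A.symm, hb.trans hb₁B.symm⟩)
      (fun ⟨ha, hb⟩ => Set.eqOn_pair_iff.2 ⟨ha.trans hb₂A.symm, hb.trans hb₂B.symm⟩)
  · rw [hn₁A, hn₁B, hn₂A, hn₂B, Real.one_rpow]
    norm_num
  · rw [mid₁, mid₂]
    intro h
    have hmem : pt j (k + 1/2) ∈ ({pt (j + 1/2) k, pt (j + 1/2) (k + 1)} : Set _) :=
      h ▸ Set.mem_insert _ _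
    rcases hmem with h' | h' <;> exact pt_ne_of_fst_ne (by linarith) h'

/-- Non-uniqueness of the Fréchet mean of two persistence diagrams.  For `j + 1 < k`,
consider `D₁ = {(j,k), (j+1,k+1)}` and `D₂ = {(j,k+1), (j+1,k)}`.  There are exactly
two bijections `D₁ → D₂`, namely `b₁ : (j,k) ↦ (j,k+1), (j+1,k+1) ↦ (j+1,k)` and
`b₂ : (j,k) ↦ (j+1,k), (j+1,k+1) ↦ (j,k+1)`.  Both move each point Euclidean
distance exactly `1`, so for every `p ≥ 1` they have the same `p`-Wasserstein cost
`∑_{x ∈ D₁} ‖x - b(x)‖^p = 2`, yet their sets of matching-segment midpoints differ: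
`{(j,k+1/2), (j+1,k+1/2)}` versus `{(j+1/2,k), (j+1/2,k+1)}`.  Hence the Fréchet
mean is not well-defined. -/
theorem frechet_mean_not_well_defined (j k : ℝ) (hjk : j + 1 < k)
    (A B A' B' : EuclideanSpace ℝ (Fin 2))
    (hA : A = pt j k) (hB : B = pt (j + 1) (k + 1))
    (hA' : A' = pt j (k + 1)) (hB' : B' = pt (j + 1) k)
    (b₁ b₂ : EuclideanSpace ℝ (Fin 2) → EuclideanSpace ℝ (Fin 2))
    (hb₁A : b₁ A = A') (hb₁B : b₁ B = B')
    (hb₂A : b₂ A = B') (hb₂B : b₂ B = A') :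
    -- b₁ and b₂ are bijections from D₁ = {A, B} onto D₂ = {A', B'}
    Set.BijOn b₁ {A, B} {A', B'} ∧ Set.BijOn b₂ {A, B} {A', B'} ∧
    -- they are distinct on D₁, and every bijection D₁ → D₂ agrees on D₁ with
    -- one of them: there are exactly two bijections from D₁ to D₂
    ¬ Set.EqOn b₁ b₂ {A, B} ∧
    (∀ f : EuclideanSpace ℝ (Fin 2) → EuclideanSpace ℝ (Fin 2),
      Set.BijOn f {A, B} {A', B'} →
        Set.EqOn f b₁ {A, B} ∨ Set.EqOn f b₂ {A, B}) ∧
    -- each point is moved Euclidean distance exactly 1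
    (‖A - b₁ A‖ = 1 ∧ ‖B - b₁ B‖ = 1 ∧ ‖A - b₂ A‖ = 1 ∧ ‖B - b₂ B‖ = 1) ∧
    -- for every p ≥ 1 the two bijections have equal p-Wasserstein cost, namely 2
    (∀ p : ℝ, 1 ≤ p →
      ‖A - b₁ A‖ ^ p + ‖B - b₁ B‖ ^ p = 2 ∧
      ‖A - b₂ A‖ ^ p + ‖B - b₂ B‖ ^ p = 2) ∧
    -- the corresponding sets of midpoints of the matching segments differ
    ({midpoint ℝ A (b₁ A), midpoint ℝ B (b₁ B)} : Set (EuclideanSpace ℝ (Fin 2))) =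
      {pt j (k + 1/2), pt (j + 1) (k + 1/2)} ∧
    ({midpoint ℝ A (b₂ A), midpoint ℝ B (b₂ B)} : Set (EuclideanSpace ℝ (Fin 2))) =
      {pt (j + 1/2) k, pt (j + 1/2) (k + 1)} ∧
    ({midpoint ℝ A (b₁ A), midpoint ℝ B (b₁ B)} : Set (EuclideanSpace ℝ (Fin 2))) ≠
      {midpoint ℝ A (b₂ A), midpoint ℝ B (b₂ B)} :=
  frechet_mean_not_well_defined_general j k A B A' B' hA hB hA' hB' b₁ b₂ hb₁A hb₁B hb₂A hb₂B
end
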